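/- arXiv:0903.4778 — 3 statements merged into one kernel-verified Lean document; each statement's English description precedes it below -/
import Mathlib

section
/- Let a, b, c be matrices with a ∈ ℂ^{n×n}, b ∈ ℂ^{n×k}, c ∈ ℂ^{k×n}, set a^× = a - b·c, and suppose Ω ∈ ℂ^{n×n} satisfies the Lyapunov equation i(Ω·(a^×)^* - a^×·Ω) = b·b^*. Define the 2n×2n block matrices A = [[a^×, -b·b^*],[0, (a^×)^*]] and P = [[I_n, iΩ],[0, 0]]. Then P is a projection (P² = P) and P commutes with A (PA = AP). -/
open Matrix

section BlockTriangular

variable {m n R : Type*} [Fintype m] [Fintype n] [DecidableEq m] [DecidableEq n]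

theorem isIdempotentElem_fromBlocks_one_zero_zero [Semiring R] (X : Matrix m n R) :
    IsIdempotentElem (fromBlocks (1 : Matrix m m R) X 0 (0 : Matrix n n R)) := by
  simp [IsIdempotentElem, fromBlocks_multiply]

theorem fromBlocks_one_zero_zero_mul_comm_iff [Semiring R] (X E : Matrix m n R)
    (D : Matrix m m R) (F : Matrix n n R) :
    fromBlocks 1 X 0 0 * fromBlocks D E 0 F = fromBlocks D E 0 F * fromBlocks 1 X 0 0 ↔
      E + X * F = D * X := by
  simp [fromBlocks_multiply, fromBlocks_inj]

end BlockTriangular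

theorem stmt_4 {n k : ℕ}
    (a : Matrix (Fin n) (Fin n) ℂ) (b : Matrix (Fin n) (Fin k) ℂ)
    (c : Matrix (Fin k) (Fin n) ℂ)
    (Ω : Matrix (Fin n) (Fin n) ℂ)
    (hΩ : Complex.I • (Ω * (a - b * c)ᴴ - (a - b * c) * Ω) = b * bᴴ)
    (A P : Matrix (Fin n ⊕ Fin n) (Fin n ⊕ Fin n) ℂ)
    (hA : A = Matrix.fromBlocks (a - b * c) (-(b * bᴴ)) 0 (a - b * c)ᴴ)
    (hP : P = Matrix.fromBlocks 1 (Complex.I • Ω) 0 0) :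
    P * P = P ∧ P * A = A * P := by
  subst hA hP
  refine ⟨isIdempotentElem_fromBlocks_one_zero_zero _,
    (fromBlocks_one_zero_zero_mul_comm_iff _ _ _ _).mpr ?_⟩
  rw [Matrix.smul_mul, Matrix.mul_smul, ← hΩ, smul_sub]
  abel
end

section
/- Let β ∈ ℂ^{n×n} and γ₁, γ₂ ∈ ℂ^{n×r} with β^* - β = i·γ₂·γ₂^*. Define A = 2[[β^*, γ₂γ₂^*],[0, β]], B = √2·[[γ₂],[γ₁]], C = √2·[γ₁^*, γ₂^*], P = [[I_n, -iI_n],[0,0]], and S = [[I_n, iI_n],[0, I_n]]. Then S is invertible with S^{-1} = [[I_n, -iI_n],[0, I_n]], and A = S·diag(2β^*, 2β)·S^{-1}, P = S·[[I_n,0],[0,0]]·S^{-1}. -/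
/-!
Conjugating a block-diagonal matrix `diag(D₁, D₂)` by `[[1, X], [0, 1]]` creates the corner
`X D₂ - D₁ X`. For `X = i·1`, `D₁ = βᴴ`, `D₂ = β` this is `i(β - βᴴ)`, which equals `γ₂γ₂ᴴ`
exactly by admissibility; for `D₁ = 1`, `D₂ = 0` it is `-i·1`, the corner of `P`.
-/

open Matrix

section BlockUnitriangular

variable {m R : Type*} [Fintype m] [DecidableEq m] [Ring R]

theorem fromBlocks_one_mul_fromBlocks_one (X Y : Matrix m m R) :
    fromBlocks 1 X 0 1 * (fromBlocks 1 Y 0 1 : Matrix (m ⊕ m) (m ⊕ m) R) =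
      fromBlocks 1 (X + Y) 0 1 := by
  simp [fromBlocks_multiply, add_comm]

theorem fromBlocks_one_mul_fromBlocks_one_neg (X : Matrix m m R) :
    fromBlocks 1 X 0 1 * fromBlocks 1 (-X) 0 1 = (1 : Matrix (m ⊕ m) (m ⊕ m) R) := by
  rw [fromBlocks_one_mul_fromBlocks_one, add_neg_cancel, fromBlocks_one]

theorem fromBlocks_one_neg_mul_fromBlocks_one (X : Matrix m m R) :
    fromBlocks 1 (-X) 0 1 * fromBlocks 1 X 0 1 = (1 : Matrix (m ⊕ m) (m ⊕ m) R) := by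
  rw [fromBlocks_one_mul_fromBlocks_one, neg_add_cancel, fromBlocks_one]

theorem fromBlocks_one_conj_fromBlocks_diagonal (X D₁ D₂ : Matrix m m R) :
    fromBlocks 1 X 0 1 * fromBlocks D₁ 0 0 D₂ * fromBlocks 1 (-X) 0 1 =
      fromBlocks D₁ (X * D₂ - D₁ * X) 0 D₂ := by
  simp [fromBlocks_multiply, sub_eq_neg_add]

end BlockUnitriangular

theorem stmt_6_general {n r : ℕ}
    (β : Matrix (Fin n) (Fin n) ℂ) (γ₂ : Matrix (Fin n) (Fin r) ℂ)
    (hadm : βᴴ - β = Complex.I • (γ₂ * γ₂ᴴ))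
    (A P S Sinv : Matrix (Fin n ⊕ Fin n) (Fin n ⊕ Fin n) ℂ)
    (hA : A = (2 : ℂ) • Matrix.fromBlocks βᴴ (γ₂ * γ₂ᴴ) 0 β)
    (hP : P = Matrix.fromBlocks 1 (-(Complex.I • (1 : Matrix (Fin n) (Fin n) ℂ))) 0 0)
    (hS : S = Matrix.fromBlocks 1 (Complex.I • (1 : Matrix (Fin n) (Fin n) ℂ)) 0 1)
    (hSinv : Sinv = Matrix.fromBlocks 1 (-(Complex.I • (1 : Matrix (Fin n) (Fin n) ℂ))) 0 1) :
    S * Sinv = 1 ∧ Sinv * S = 1 ∧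
    A = S * ((2 : ℂ) • Matrix.fromBlocks βᴴ 0 0 β) * Sinv ∧
    P = S * Matrix.fromBlocks 1 0 0 0 * Sinv := by
  subst hA hP hS hSinv
  have hcorner : (Complex.I • 1) * β - βᴴ * (Complex.I • 1) = γ₂ * γ₂ᴴ := by
    rw [smul_one_mul, mul_smul_one, ← smul_sub, ← neg_sub, hadm, smul_neg, smul_smul,
      Complex.I_mul_I, neg_one_smul, neg_neg]
  refine ⟨fromBlocks_one_mul_fromBlocks_one_neg _, fromBlocks_one_neg_mul_fromBlocks_one _,
    ?_, ?_⟩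
  · rw [Matrix.mul_smul, Matrix.smul_mul, fromBlocks_one_conj_fromBlocks_diagonal, hcorner]
  · rw [fromBlocks_one_conj_fromBlocks_diagonal]
    simp

theorem stmt_6 {n r : ℕ}
    (β : Matrix (Fin n) (Fin n) ℂ) (γ₁ γ₂ : Matrix (Fin n) (Fin r) ℂ)
    (hadm : βᴴ - β = Complex.I • (γ₂ * γ₂ᴴ))
    (A P S Sinv : Matrix (Fin n ⊕ Fin n) (Fin n ⊕ Fin n) ℂ)
    (hA : A = (2 : ℂ) • Matrix.fromBlocks βᴴ (γ₂ * γ₂ᴴ) 0 β)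
    (hP : P = Matrix.fromBlocks 1 (-(Complex.I • (1 : Matrix (Fin n) (Fin n) ℂ))) 0 0)
    (hS : S = Matrix.fromBlocks 1 (Complex.I • (1 : Matrix (Fin n) (Fin n) ℂ)) 0 1)
    (hSinv : Sinv = Matrix.fromBlocks 1 (-(Complex.I • (1 : Matrix (Fin n) (Fin n) ℂ))) 0 1) :
    S * Sinv = 1 ∧ Sinv * S = 1 ∧
    A = S * ((2 : ℂ) • Matrix.fromBlocks βᴴ 0 0 β) * Sinv ∧
    P = S * Matrix.fromBlocks 1 0 0 0 * Sinv :=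
  stmt_6_general β γ₂ hadm A P S Sinv hA hP hS hSinv
end

section
/- Let β ∈ ℂ^{n×n}, γ₁, γ₂ ∈ ℂ^{n×r}, and define A = 2[[β^*, γ₂γ₂^*],[0, β]], B = √2·[[γ₂],[γ₁]], C = √2·[γ₁^*, γ₂^*], P = [[I_n, -iI_n],[0,0]]. Assume β^* - β = iγ₂γ₂^*. Then for every t ∈ ℝ, i·C·exp(-itA)·(I-P)·B = -2·(γ₁ + iγ₂)^*·exp(-2itβ)·γ₁ and -i·C·exp(-itA)·P·B = -2·γ₁^*·exp(-2itβ^*)·(γ₁ + iγ₂). -/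
/-!
Under the admissibility condition the off-diagonal block `γ₂ γ₂ᴴ` of the generator equals
`X β - βᴴ X` with `X = i • 1`, so conjugation by the unipotent matrix `[[1, X], [0, 1]]`
block-diagonalises it. Hence `exp (-itA) = [[E', i (E - E')], [0, E]]` with `E = exp (-2itβ)` and
`E' = exp (-2itβᴴ)`, and both identities follow by multiplying out blocks: `1 - P` and `P` each
cancel the terms carrying the other exponential.
-/

open Matrix NormedSpace

namespace Matrix

variable {m n 𝔸 : Type*} [Fintype m] [DecidableEq m] [Fintype n] [DecidableEq n]

theorem fromBlocks_one_mul_fromBlocks_one_neg [Ring 𝔸] (X : Matrix m n 𝔸) :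
    fromBlocks 1 X 0 1 * fromBlocks 1 (-X) 0 1 = (1 : Matrix (m ⊕ n) (m ⊕ n) 𝔸) := by
  simp [fromBlocks_multiply, fromBlocks_one]

theorem fromBlocks_one_neg_mul_fromBlocks_one [Ring 𝔸] (X : Matrix m n 𝔸) :
    fromBlocks 1 (-X) 0 1 * fromBlocks 1 X 0 1 = (1 : Matrix (m ⊕ n) (m ⊕ n) 𝔸) := by
  simpa using fromBlocks_one_mul_fromBlocks_one_neg (-X)

variable [NormedRing 𝔸] [NormedAlgebra ℚ 𝔸] [CompleteSpace 𝔸]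

open scoped Norms.Operator in
theorem exp_fromBlocks_zero₁₂_zero₂₁ (a : Matrix m m 𝔸) (d : Matrix n n 𝔸) :
    exp (fromBlocks a 0 0 d) = fromBlocks (exp a) 0 0 (exp d) := by
  let blockDiag : Matrix m m 𝔸 × Matrix n n 𝔸 →+* Matrix (m ⊕ n) (m ⊕ n) 𝔸 :=
    { toFun := fun p => fromBlocks p.1 0 0 p.2
      map_one' := fromBlocks_one
      map_mul' := fun p q => by simp [fromBlocks_multiply]
      map_zero' := fromBlocks_zero
      map_add' := fun p q => by simp [fromBlocks_add] }
  -- `map_exp` needs completeness for the operator-norm uniformity, which is only defeq to the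
  -- default one on matrices.
  have : @CompleteSpace (Matrix m m 𝔸) PseudoMetricSpace.toUniformSpace :=
    (inferInstance : CompleteSpace (Matrix m m 𝔸))
  have : @CompleteSpace (Matrix n n 𝔸) PseudoMetricSpace.toUniformSpace :=
    (inferInstance : CompleteSpace (Matrix n n 𝔸))
  have hcont : Continuous blockDiag :=
    continuous_fst.matrix_fromBlocks continuous_const continuous_const continuous_snd
  calc exp (fromBlocks a 0 0 d) = blockDiag (exp (a, d)) := (map_exp blockDiag hcont (a, d)).symm
    _ = fromBlocks (exp a) 0 0 (exp d) :=
      congrArg₂ (fromBlocks · 0 0 ·) (Prod.fst_exp (a, d)) (Prod.snd_exp (a, d))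

theorem exp_fromBlocks_sylvester (a : Matrix m m 𝔸) (d : Matrix n n 𝔸) (X : Matrix m n 𝔸) :
    exp (fromBlocks a (X * d - a * X) 0 d) =
      fromBlocks (exp a) (X * exp d - exp a * X) 0 (exp d) := by
  let S : (Matrix (m ⊕ n) (m ⊕ n) 𝔸)ˣ :=
    ⟨fromBlocks 1 X 0 1, fromBlocks 1 (-X) 0 1, fromBlocks_one_mul_fromBlocks_one_neg X,
      fromBlocks_one_neg_mul_fromBlocks_one X⟩
  have hconj (a' : Matrix m m 𝔸) (d' : Matrix n n 𝔸) :
      fromBlocks a' (X * d' - a' * X) 0 d' = S * fromBlocks a' 0 0 d' * S⁻¹.val := by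
    simp [S, fromBlocks_multiply, sub_eq_neg_add]
  rw [hconj, exp_units_conj, exp_fromBlocks_zero₁₂_zero₂₁, hconj]

end Matrix

open Complex

theorem exp_smul_fromBlocks_of_admissible {m ι : Type*} [Fintype m] [DecidableEq m] [Fintype ι]
    (β : Matrix m m ℂ) (γ₂ : Matrix m ι ℂ) (hadm : βᴴ - β = I • (γ₂ * γ₂ᴴ)) (s : ℂ) :
    exp (s • fromBlocks βᴴ (γ₂ * γ₂ᴴ) 0 β) =
      fromBlocks (exp (s • βᴴ)) (I • (exp (s • β) - exp (s • βᴴ))) 0 (exp (s • β)) := by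
  have hγ : γ₂ * γ₂ᴴ = I • (β - βᴴ) := by
    rw [← neg_sub, hadm, smul_neg, smul_smul, I_mul_I, neg_one_smul, neg_neg]
  have hsylv : s • fromBlocks βᴴ (γ₂ * γ₂ᴴ) 0 β =
      fromBlocks (s • βᴴ) ((I • 1) * (s • β) - (s • βᴴ) * (I • 1)) 0 (s • β) := by
    rw [fromBlocks_smul, smul_zero, hγ]
    congr 1
    simp only [Matrix.smul_mul, Matrix.mul_smul, Matrix.one_mul, Matrix.mul_one]
    module
  rw [hsylv, exp_fromBlocks_sylvester]
  simp only [Matrix.smul_mul, Matrix.mul_smul, Matrix.one_mul, Matrix.mul_one, smul_sub]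

theorem stmt_7 {n r : ℕ}
    (β : Matrix (Fin n) (Fin n) ℂ) (γ₁ γ₂ : Matrix (Fin n) (Fin r) ℂ)
    (hadm : βᴴ - β = Complex.I • (γ₂ * γ₂ᴴ))
    (A P : Matrix (Fin n ⊕ Fin n) (Fin n ⊕ Fin n) ℂ)
    (B : Matrix (Fin n ⊕ Fin n) (Fin r) ℂ) (C : Matrix (Fin r) (Fin n ⊕ Fin n) ℂ)
    (hA : A = (2 : ℂ) • Matrix.fromBlocks βᴴ (γ₂ * γ₂ᴴ) 0 β)
    (hB : B = (Real.sqrt 2 : ℂ) • Matrix.fromRows γ₂ γ₁)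
    (hC : C = (Real.sqrt 2 : ℂ) • Matrix.fromCols γ₁ᴴ γ₂ᴴ)
    (hP : P = Matrix.fromBlocks 1 (-(Complex.I • (1 : Matrix (Fin n) (Fin n) ℂ))) 0 0) :
    ∀ t : ℝ,
      Complex.I • (C * NormedSpace.exp ((-(Complex.I * t)) • A) * (1 - P) * B) =
        (-2 : ℂ) • ((γ₁ + Complex.I • γ₂)ᴴ *
          NormedSpace.exp ((-(2 * Complex.I * t)) • β) * γ₁) ∧
      (-Complex.I) • (C * NormedSpace.exp ((-(Complex.I * t)) • A) * P * B) =
        (-2 : ℂ) • (γ₁ᴴ * NormedSpace.exp ((-(2 * Complex.I * t)) • βᴴ) *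
          (γ₁ + Complex.I • γ₂)) := by
  intro t
  subst hA hB hC hP
  have hsqrt : ((√2 : ℝ) : ℂ) * ((√2 : ℝ) : ℂ) = 2 := by
    rw [← ofReal_mul, Real.mul_self_sqrt zero_le_two, ofReal_ofNat]
  have hcompl : 1 - fromBlocks 1 (-(I • 1)) 0 0 =
      (fromBlocks 0 (I • 1) 0 1 : Matrix (Fin n ⊕ Fin n) (Fin n ⊕ Fin n) ℂ) := by
    rw [← fromBlocks_one, sub_eq_add_neg, fromBlocks_neg, fromBlocks_add]
    simp
  rw [smul_smul, show -(I * t) * 2 = -(2 * I * t) by ring,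
    exp_smul_fromBlocks_of_admissible β γ₂ hadm, hcompl]
  constructor <;>
  · simp only [Matrix.smul_mul, Matrix.mul_smul, smul_smul, fromCols_mul_fromBlocks,
      fromCols_mul_fromRows, Matrix.mul_zero, Matrix.zero_mul, add_zero, zero_add,
      Matrix.mul_add, Matrix.add_mul, Matrix.mul_sub, Matrix.sub_mul, Matrix.mul_neg,
      Matrix.neg_mul, Matrix.mul_one,
      conjTranspose_add, conjTranspose_smul, star_def, conj_I, hsqrt]
    match_scalars <;> first | ring1 | linear_combination 2 * I_mul_I
end
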